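/- For any distribution function G on ℝ and any p ∈ [0,1], the function F_p(x) = G(x) + p·(1-G(x))·log(1-G(x)) is a valid distribution function, i.e., it is nondecreasing, tends to 0 as x → -∞ and to 1 as x → +∞, where we interpret (1-G(x))·log(1-G(x)) = 0 when G(x) = 1. -/

import Mathlib

open Filter Topology Set

/-! `F_p = φ_p ∘ G` with `φ_p u = u + p (1 - u) log (1 - u)`. The map `φ_p` is continuous with
`φ_p 0 = 0`, `φ_p 1 = 1`, and `φ_p' u = (1 - p) - p log (1 - u) ≥ 0` on `(0, 1)`, so it is a
monotone self-map of `[0, 1]` fixing the endpoints; composing with `G` preserves all three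
properties of a distribution function. -/

noncomputable def recordTransmutation (p u : ℝ) : ℝ :=
  u + p * (1 - u) * Real.log (1 - u)

namespace recordTransmutation

@[simp]
lemma apply_zero (p : ℝ) : recordTransmutation p 0 = 0 := by
  simp [recordTransmutation]

@[simp]
lemma apply_one (p : ℝ) : recordTransmutation p 1 = 1 := by
  simp [recordTransmutation]

lemma eq_add_mul_mulLog (p u : ℝ) :
    recordTransmutation p u = u + p * ((1 - u) * Real.log (1 - u)) := by
  rw [recordTransmutation, mul_assoc]

-- `(1 - u) log (1 - u)` is continuous through `u = 1` since `Real.log 0 = 0` and `v log v → 0`.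
lemma continuous (p : ℝ) : Continuous (recordTransmutation p) := by
  rw [funext (eq_add_mul_mulLog p)]
  exact continuous_id.add
    (continuous_const.mul (Real.continuous_mul_log.comp (continuous_const.sub continuous_id)))

lemma hasDerivAt (p : ℝ) {u : ℝ} (hu : u ≠ 1) :
    HasDerivAt (recordTransmutation p) (1 - p - p * Real.log (1 - u)) u := by
  have hmulLog : HasDerivAt (fun u => (1 - u) * Real.log (1 - u))
      (-(Real.log (1 - u) + 1)) u := by
    have := (Real.hasDerivAt_mul_log (sub_ne_zero.2 hu.symm)).comp u
      ((hasDerivAt_id' u).const_sub 1)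
    simpa only [Function.comp_def, mul_neg_one] using this
  rw [funext (eq_add_mul_mulLog p)]
  exact ((hasDerivAt_id' u).add (hmulLog.const_mul p)).congr_deriv (by ring)

lemma monotoneOn {p : ℝ} (hp0 : 0 ≤ p) (hp1 : p ≤ 1) :
    MonotoneOn (recordTransmutation p) (Icc 0 1) := by
  refine monotoneOn_of_hasDerivWithinAt_nonneg (convex_Icc 0 1) (continuous p).continuousOn
    (fun u hu => (hasDerivAt p ?_).hasDerivWithinAt) fun u hu => ?_
  all_goals rw [interior_Icc] at hu
  · exact hu.2.ne
  · have hlog : Real.log (1 - u) ≤ 0 := Real.log_nonpos (by linarith [hu.2]) (by linarith [hu.1])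
    nlinarith

end recordTransmutation

theorem rt_transmuted_is_df (G : ℝ → ℝ) (p : ℝ)
    (hG : Monotone G)
    (hG0 : ∀ x, 0 ≤ G x) (hG1 : ∀ x, G x ≤ 1)
    (hGbot : Tendsto G atBot (𝓝 0)) (hGtop : Tendsto G atTop (𝓝 1))
    (hp0 : 0 ≤ p) (hp1 : p ≤ 1) :
    Monotone (fun x => G x + p * (1 - G x) * Real.log (1 - G x)) ∧
    Tendsto (fun x => G x + p * (1 - G x) * Real.log (1 - G x)) atBot (𝓝 0) ∧
    Tendsto (fun x => G x + p * (1 - G x) * Real.log (1 - G x)) atTop (𝓝 1) := by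
  have hφ := recordTransmutation.continuous p
  refine ⟨fun x y hxy => ?_, ?_, ?_⟩
  · exact recordTransmutation.monotoneOn hp0 hp1 ⟨hG0 x, hG1 x⟩ ⟨hG0 y, hG1 y⟩ (hG hxy)
  · have h := (hφ.tendsto 0).comp hGbot
    rwa [recordTransmutation.apply_zero] at h
  · have h := (hφ.tendsto 1).comp hGtop
    rwa [recordTransmutation.apply_one] at h
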